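/- arXiv:1404.3131 — 2 statements merged into one kernel-verified Lean document; each statement's English description precedes it below -/
import Mathlib

section
/- With the binary decision tree encoding of a multivalued event: assigning to each internal node n an independent Boolean event b_n that is true with probability equal to the label of n's left edge, exactly one leaf's path-conjunction (the conjunction of literals b_n or ¬b_n along its root-to-leaf path) is satisfied under every valuation of the Boolean events, and the probability that the path-conjunction of leaf x is satisfied equals p(x). -/
/-- Binary decision trees whose leaves carry outcomes from `X` and whose internal nodes carry
the probability labels of their two child edges. -/
inductive PTree (X : Type) : Type
  | leaf : X → PTree X
  | node : ℝ → ℝ → PTree X → PTree X → PTree X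

/-- Edge labels are conditional probabilities at every internal node. -/
def PTree.valid {X : Type} : PTree X → Prop
  | .leaf _ => True
  | .node pl pr l r => 0 ≤ pl ∧ 0 ≤ pr ∧ pl + pr = 1 ∧ l.valid ∧ r.valid

/-- Leaves with the product of edge labels on their root path and their root-to-leaf code
(`true` = going left). -/
def PTree.centries {X : Type} : PTree X → List (X × ℝ × List Bool)
  | .leaf x => [(x, 1, [])]
  | .node pl pr l r =>
      (l.centries.map fun e => (e.1, pl * e.2.1, true :: e.2.2)) ++
      (r.centries.map fun e => (e.1, pr * e.2.1, false :: e.2.2))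

/-- Positions (root paths) of the internal nodes. -/
def PTree.nodesPos {X : Type} : PTree X → List (List Bool)
  | .leaf _ => []
  | .node _ _ l r => [] :: (l.nodesPos.map (true :: ·) ++ r.nodesPos.map (false :: ·))

/-- The probability of the left edge (the probability that the Boolean event of that internal
node is true) at a given internal node position. -/
def PTree.lprob {X : Type} : PTree X → List Bool → ℝ
  | .leaf _, _ => 0
  | .node pl _ _ _, [] => pl
  | .node _ _ l _, true :: c => l.lprob c
  | .node _ _ _ r, false :: c => r.lprob c

/-!
Reading the valuation as instructions at the internal nodes (true = go left) leads from the root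
to exactly one leaf; any other leaf's path leaves this one at some node, where its literal is
violated. For the probabilities, the node events are independent: summing the product weight over
all valuations with prescribed values on the nodes of a root path leaves the product of the
probabilities of those literals (every other node sums out to `q + (1 - q) = 1`), and along a root
path this is the product of the edge labels, which the hypotheses identify with `p x`.
-/

theorem Finset.sum_powerset_ite_forall_mem_iff {α R : Type*} [DecidableEq α] [CommRing R]
    {S T : Finset α} (hT : T ⊆ S) (P : α → Prop) [DecidablePred P] (q : α → R) :
    ∑ s ∈ S.powerset, (if ∀ a ∈ T, (a ∈ s ↔ P a)
      then ∏ x ∈ S, (if x ∈ s then q x else 1 - q x) else 0) =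
    ∏ a ∈ T, (if P a then q a else 1 - q a) := by
  -- The summand is `(∏ x ∈ s, F x) * ∏ x ∈ S \ s, G x`, so `Finset.prod_add` applies.
  set F : α → R := fun x => if x ∈ T → P x then q x else 0
  set G : α → R := fun x => if x ∈ T → ¬P x then 1 - q x else 0
  have hsummand : ∀ s ∈ S.powerset, (if ∀ a ∈ T, (a ∈ s ↔ P a)
      then ∏ x ∈ S, (if x ∈ s then q x else 1 - q x) else 0) =
      (∏ x ∈ s, F x) * ∏ x ∈ S \ s, G x := by
    intro s hs
    have hfactor : ∀ x, s.piecewise F G x =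
        (if x ∈ s then q x else 1 - q x) * if x ∈ T → (x ∈ s ↔ P x) then 1 else 0 := by
      intro x
      by_cases hx : x ∈ s <;> simp [F, G, hx]
    have hcond : (∀ x ∈ S, x ∈ T → (x ∈ s ↔ P x)) ↔ ∀ a ∈ T, (a ∈ s ↔ P a) :=
      ⟨fun h a ha => h a (hT ha) ha, fun h a _ ha => h a ha⟩
    have hsplit := prod_piecewise S s F G
    rw [inter_eq_right.mpr (mem_powerset.mp hs)] at hsplit
    rw [← hsplit, prod_congr rfl fun x _ => hfactor x, prod_mul_distrib, prod_boole,
      if_congr hcond rfl rfl, mul_ite, mul_one, mul_zero]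
  have hpair : ∀ x, F x + G x = if x ∈ T then (if P x then q x else 1 - q x) else 1 := by
    intro x
    by_cases hx : x ∈ T <;> by_cases hPx : P x <;> simp [F, G, hx, hPx]
  rw [sum_congr rfl hsummand, ← prod_add, prod_congr rfl fun x _ => hpair x, prod_ite_mem,
    inter_eq_right.mpr hT]

theorem List.existsUnique_mem_map {α β : Type*} {l : List α} {f : α → β} {Q : β → Prop}
    (h : ∃! a, a ∈ l ∧ Q (f a)) : ∃! b, b ∈ l.map f ∧ Q b := by
  obtain ⟨a, ⟨ha, hQa⟩, huniq⟩ := h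
  refine ⟨f a, ⟨List.mem_map_of_mem ha, hQa⟩, ?_⟩
  rintro _ ⟨hb, hQb⟩
  obtain ⟨a', ha', rfl⟩ := List.mem_map.mp hb
  rw [huniq a' ⟨ha', hQb⟩]

namespace PTree

variable {X : Type}

def SatisfiesPath (ν : List Bool → Bool) (c : List Bool) : Prop :=
  ∀ i : ℕ, ∀ h : i < c.length, ν (c.take i) = c.get ⟨i, h⟩

theorem satisfiesPath_cons {ν : List Bool → Bool} {b : Bool} {c : List Bool} :
    SatisfiesPath ν (b :: c) ↔ ν [] = b ∧ SatisfiesPath (fun d => ν (b :: d)) c := by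
  constructor
  · intro h
    exact ⟨h 0 (by simp), fun i hi => by simpa using h (i + 1) (by simpa using hi)⟩
  · rintro ⟨h0, h⟩ (_ | i) hi
    · simpa using h0
    · simpa using h i (by simpa using hi)

theorem existsUnique_mem_centries_satisfiesPath (t : PTree X) (ν : List Bool → Bool) :
    ∃! e, e ∈ t.centries ∧ SatisfiesPath ν e.2.2 := by
  induction t generalizing ν with
  | leaf x => exact ⟨(x, 1, []), by simp [centries, SatisfiesPath]⟩
  | node pl pr l r ihl ihr =>
    cases hb : ν [] with
    | true =>
      have hbranch : ∃! e, e ∈ l.centries.map (fun e => (e.1, pl * e.2.1, true :: e.2.2)) ∧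
          SatisfiesPath ν e.2.2 :=
        List.existsUnique_mem_map <| by
          simpa [satisfiesPath_cons, hb] using ihl fun d => ν (true :: d)
      refine (existsUnique_congr fun e => ?_).mpr hbranch
      simp only [centries, List.mem_append, or_and_right]
      refine or_iff_left_of_imp fun ⟨he, hpath⟩ => ?_
      obtain ⟨a, -, rfl⟩ := List.mem_map.mp he
      simp [satisfiesPath_cons, hb] at hpath
    | false =>
      have hbranch : ∃! e, e ∈ r.centries.map (fun e => (e.1, pr * e.2.1, false :: e.2.2)) ∧
          SatisfiesPath ν e.2.2 :=
        List.existsUnique_mem_map <| by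
          simpa [satisfiesPath_cons, hb] using ihr fun d => ν (false :: d)
      refine (existsUnique_congr fun e => ?_).mpr hbranch
      simp only [centries, List.mem_append, or_and_right]
      refine or_iff_right_of_imp fun ⟨he, hpath⟩ => ?_
      obtain ⟨a, -, rfl⟩ := List.mem_map.mp he
      simp [satisfiesPath_cons, hb] at hpath

theorem take_mem_nodesPos {t : PTree X} {x : X} {w : ℝ} {path : List Bool}
    (he : (x, w, path) ∈ t.centries) (i : ℕ) (hi : i < path.length) :
    path.take i ∈ t.nodesPos := by
  induction t generalizing x w path i with
  | leaf x => simp_all [centries]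
  | node pl pr l r ihl ihr =>
    simp only [centries, List.mem_append, List.mem_map, Prod.mk.injEq] at he
    rcases he with ⟨⟨_, _, c⟩, ha, rfl, rfl, rfl⟩ | ⟨⟨_, _, c⟩, ha, rfl, rfl, rfl⟩ <;>
      rcases i with _ | i
    all_goals simp only [List.length_cons, Nat.add_lt_add_iff_right] at hi
    · simp [nodesPos]
    · simpa [nodesPos] using ihl ha i hi
    · simp [nodesPos]
    · simpa [nodesPos] using ihr ha i hi

theorem prod_lprob_path {t : PTree X} (hv : t.valid) {x : X} {w : ℝ} {path : List Bool}
    (he : (x, w, path) ∈ t.centries) :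
    ∏ i : Fin path.length,
      (if path[(i : ℕ)] then t.lprob (path.take i) else 1 - t.lprob (path.take i)) = w := by
  induction t generalizing x w path with
  | leaf x =>
    obtain ⟨rfl, rfl, rfl⟩ : x = _ ∧ w = 1 ∧ path = [] := by simpa [centries] using he
    simp
  | node pl pr l r ihl ihr =>
    obtain ⟨-, -, hsum, hvl, hvr⟩ := hv
    simp only [centries, List.mem_append, List.mem_map, Prod.mk.injEq] at he
    rcases he with ⟨⟨_, _, c⟩, ha, rfl, rfl, rfl⟩ | ⟨⟨_, _, c⟩, ha, rfl, rfl, rfl⟩ <;>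
      refine (Fin.prod_univ_succ (n := c.length) _).trans ?_
    · simp [lprob, ihl hvl ha]
    · simp [lprob, ihr hvr ha, ← eq_sub_of_add_eq' hsum]

open Finset in
theorem sum_powerset_ite_path_eq {t : PTree X} (hv : t.valid) {x : X} {w : ℝ}
    {path : List Bool} (he : (x, w, path) ∈ t.centries) :
    ∑ s ∈ t.nodesPos.toFinset.powerset,
      (if ∀ i : ℕ, ∀ h : i < path.length, (path.take i ∈ s ↔ path.get ⟨i, h⟩ = true)
        then ∏ pos ∈ t.nodesPos.toFinset, (if pos ∈ s then t.lprob pos else 1 - t.lprob pos)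
        else 0) = w := by
  set T := univ.image fun i : Fin path.length => path.take i
  have hinj : Function.Injective fun i : Fin path.length => path.take i := fun i j hij =>
    Fin.ext (by simpa [i.2.le, j.2.le] using congrArg List.length hij)
  have hT : T ⊆ t.nodesPos.toFinset := by
    simpa [T, subset_iff] using fun i : Fin path.length => take_mem_nodesPos he i i.2
  -- `P a`: the path turns left at the node `a`.
  let P : List Bool → Prop := fun a => path[a.length]? = some true
  have hP : ∀ i : Fin path.length, P (path.take i) ↔ path[(i : ℕ)] = true := by simp [P]
  calc _ = ∑ s ∈ t.nodesPos.toFinset.powerset,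
        (if ∀ a ∈ T, (a ∈ s ↔ P a)
          then ∏ pos ∈ t.nodesPos.toFinset, (if pos ∈ s then t.lprob pos else 1 - t.lprob pos)
          else 0) := by
        refine sum_congr rfl fun s _ => if_congr ?_ rfl rfl
        simp only [T, forall_mem_image, mem_univ, true_implies, hP, Fin.forall_iff,
          List.get_eq_getElem]
    _ = ∏ a ∈ T, (if P a then t.lprob a else 1 - t.lprob a) :=
        sum_powerset_ite_forall_mem_iff hT P t.lprob
    _ = ∏ i : Fin path.length,
          (if path[(i : ℕ)] then t.lprob (path.take i) else 1 - t.lprob (path.take i)) := by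
        rw [prod_image hinj.injOn]
        exact prod_congr rfl fun i _ => if_congr (hP i) rfl rfl
    _ = w := prod_lprob_path hv he

end PTree

theorem decision_tree_conjunctions_partition_general {X : Type}
    (p : X → ℝ) (t : PTree X) (hval : t.valid)
    (hprob : ∀ e ∈ t.centries, e.2.1 = p e.1) :
    (∀ ν : List Bool → Bool,
      ∃! e : X × ℝ × List Bool, e ∈ t.centries ∧
        (∀ i : ℕ, ∀ h : i < e.2.2.length, ν (e.2.2.take i) = e.2.2.get ⟨i, h⟩)) ∧
    (∀ e ∈ t.centries,
      ∑ s ∈ t.nodesPos.toFinset.powerset,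
        (if (∀ i : ℕ, ∀ h : i < e.2.2.length,
              ((e.2.2.take i ∈ s) ↔ e.2.2.get ⟨i, h⟩ = true))
          then ∏ pos ∈ t.nodesPos.toFinset,
                (if pos ∈ s then t.lprob pos else 1 - t.lprob pos)
          else 0) = p e.1) :=
  ⟨t.existsUnique_mem_centries_satisfiesPath,
    fun e he => (PTree.sum_powerset_ite_path_eq hval he).trans (hprob e he)⟩

/-- With an independent Boolean event at every internal node (true with probability the label
of its left edge): (1) under every valuation of the events, exactly one leaf's path-conjunction
is satisfied, and (2) the probability that the path-conjunction of the leaf of outcome `x` is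
satisfied equals `p x`. Valuations are modeled as functions on node positions in (1) and as
subsets of the finite set of internal node positions in (2). -/
theorem decision_tree_conjunctions_partition {X : Type} [Fintype X] [DecidableEq X]
    (p : X → ℝ) (hp : ∀ x, 0 < p x) (hp1 : ∑ x : X, p x = 1)
    (t : PTree X) (hval : t.valid)
    (hnodup : (t.centries.map (fun e => e.1)).Nodup)
    (hsurj : ∀ x : X, x ∈ t.centries.map (fun e => e.1))
    (hprob : ∀ e ∈ t.centries, e.2.1 = p e.1) :
    (∀ ν : List Bool → Bool,
      ∃! e : X × ℝ × List Bool, e ∈ t.centries ∧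
        (∀ i : ℕ, ∀ h : i < e.2.2.length, ν (e.2.2.take i) = e.2.2.get ⟨i, h⟩)) ∧
    (∀ e ∈ t.centries,
      ∑ s ∈ t.nodesPos.toFinset.powerset,
        (if (∀ i : ℕ, ∀ h : i < e.2.2.length,
              ((e.2.2.take i ∈ s) ↔ e.2.2.get ⟨i, h⟩ = true))
          then ∏ pos ∈ t.nodesPos.toFinset,
                (if pos ∈ s then t.lprob pos else 1 - t.lprob pos)
          else 0) = p e.1) :=
  decision_tree_conjunctions_partition_general p t hval hprob
end

section
/- Let P_1, …, P_m be finite nonempty sets of 'options', where each option is either a tree or the special symbol ⊥ (meaning 'produce nothing'), and let T_1, …, T_n be trees with n ≤ m. Then there exists a choice (x_1, …, x_m) with x_i ∈ P_i such that the multiset of non-⊥ choices equals the multiset {T_1, …, T_n} if and only if the following bipartite graph has a perfect matching: the left vertices are 1, …, m; the right vertices are T_1, …, T_n together with m − n dummy vertices; there is an edge from i to T_j iff T_j ∈ P_i, and an edge from i to each dummy iff ⊥ ∈ P_i. -/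
private lemma multiset_option_decomp {T : Type*} [DecidableEq T] (s : Multiset (Option T)) :
    (s.filterMap id).map some + Multiset.replicate (s.count none) none = s := by
  induction s using Multiset.induction with
  | empty => simp
  | cons a s ih =>
    cases a with
    | none =>
      rw [Multiset.filterMap_cons_none _ _ rfl, Multiset.count_cons_self,
        Multiset.replicate_succ, Multiset.add_cons, ih]
    | some t =>
      rw [Multiset.filterMap_cons_some (f := id) _ _ rfl, Multiset.count_cons_of_ne (by simp),
        Multiset.map_cons, Multiset.cons_add, ih]

private lemma card_filterMap_add {T : Type*} [DecidableEq T] (s : Multiset (Option T)) :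
    Multiset.card (s.filterMap id) + s.count none = Multiset.card s := by
  conv_rhs => rw [← multiset_option_decomp s]
  simp

private lemma filterMap_add' {α β : Type*} (f : α → Option β) (s t : Multiset α) :
    (s + t).filterMap f = s.filterMap f + t.filterMap f := by
  induction s using Multiset.induction with
  | empty => simp
  | cons a s ih =>
    rw [Multiset.cons_add]
    rcases h : f a with _ | b
    · rw [Multiset.filterMap_cons_none _ _ h, Multiset.filterMap_cons_none _ _ h, ih]
    · rw [Multiset.filterMap_cons_some _ _ _ h, Multiset.filterMap_cons_some _ _ _ h, ih,
        Multiset.cons_add]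

private lemma fiber_card {α γ : Type*} [Fintype α] [DecidableEq α] [DecidableEq γ]
    (f : α → γ) (c : γ) :
    Fintype.card {a // f a = c} = Multiset.count c (Finset.univ.val.map f) := by
  rw [Fintype.card_subtype, Multiset.count_map]
  rw [Finset.card, Finset.filter_val]
  congr 1
  exact Multiset.filter_congr (by intro a _; exact ⟨Eq.symm, Eq.symm⟩)

/-- Matching characterization of realizable multisets: given nonempty option sets
`P i ⊆ Option T` (where `none` means "produce nothing") for `i < m` and target trees
`target j` for `j < n` with `n ≤ m`, some choice `x i ∈ P i` has multiset of non-`none`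
values equal to the multiset `{target 1, …, target n}` iff the bipartite graph (left vertices
`1, …, m`; right vertices the `target j` plus `m - n` dummies; edge `i — target j` iff
`some (target j) ∈ P i`; edge `i — dummy` iff `none ∈ P i`) has a perfect matching. -/
theorem choice_multiset_iff_perfect_matching {T : Type*} [DecidableEq T] {m n : ℕ}
    (hnm : n ≤ m) (P : Fin m → Finset (Option T)) (hP : ∀ i, (P i).Nonempty)
    (target : Fin n → T) :
    (∃ x : Fin m → Option T, (∀ i, x i ∈ P i) ∧
        (Finset.univ.val.map x).filterMap id = Finset.univ.val.map target) ↔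
      (∃ σ : Fin m ≃ (Fin n ⊕ Fin (m - n)),
        ∀ i : Fin m, match σ i with
          | Sum.inl j => some (target j) ∈ P i
          | Sum.inr _ => none ∈ P i) := by
  classical
  set g : Fin n ⊕ Fin (m - n) → Option T :=
    Sum.elim (fun j => some (target j)) (fun _ => none) with hg
  have huniv : (Finset.univ : Finset (Fin n ⊕ Fin (m - n))).val
      = Finset.univ.val.map Sum.inl + Finset.univ.val.map Sum.inr := by
    rw [← Finset.univ_disjSum_univ]
    rfl
  have hmapg : Finset.univ.val.map g
      = (Finset.univ.val.map target).map some
        + Multiset.replicate (m - n) none := by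
    rw [huniv, Multiset.map_add, Multiset.map_map, Multiset.map_map]
    congr 1
    · rw [Multiset.map_map]; rfl
    · rw [show (g ∘ Sum.inr) = Function.const (Fin (m - n)) (none : Option T) from rfl,
        Multiset.map_const]
      simp
  constructor
  · rintro ⟨x, hx, hfm⟩
    -- key: univ.map x = univ.map g
    have hcount : Multiset.count none (Finset.univ.val.map x) = m - n := by
      have := card_filterMap_add (Finset.univ.val.map x)
      rw [hfm] at this
      have h2 : Multiset.card (Finset.univ.val : Multiset (Fin m)) = m := by
        show Finset.univ.card = m; simp
      simp only [Multiset.card_map, h2] at this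
      have h3 : Multiset.card (Finset.univ.val : Multiset (Fin n)) = n := by
        show Finset.univ.card = n; simp
      rw [h3] at this
      omega
    have hkey : Finset.univ.val.map x = Finset.univ.val.map g := by
      rw [hmapg, ← hfm, ← hcount, multiset_option_decomp]
    have hfib : ∀ c : Option T, Nonempty ({a // x a = c} ≃ {b // g b = c}) := by
      intro c
      apply Fintype.card_eq.mp
      rw [fiber_card, fiber_card, hkey]
    refine ⟨Equiv.ofFiberEquiv (fun c => (hfib c).some), ?_⟩
    intro i
    have := Equiv.ofFiberEquiv_map (fun c => (hfib c).some) i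
    rcases hσ : Equiv.ofFiberEquiv (fun c => (hfib c).some) i with j | j <;>
      rw [hσ] at this <;> simp only [hg, Sum.elim_inl, Sum.elim_inr] at this <;>
      [skip; skip] <;> simp only [] <;> rw [this]; exacts [hx i, hx i]
  · rintro ⟨σ, hσ⟩
    refine ⟨fun i => g (σ i), ?_, ?_⟩
    · intro i
      have := hσ i
      rcases h : σ i with j | j <;> rw [h] at this <;> simpa [hg, h] using this
    · have : Finset.univ.val.map (fun i => g (σ i))
          = Finset.univ.val.map g := by
        rw [show (fun i => g (σ i)) = g ∘ σ from rfl, ← Multiset.map_map,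
          show Finset.univ.val.map ⇑σ = (Finset.univ.map σ.toEmbedding).val from rfl,
          Finset.map_univ_equiv]
      have hrep : ∀ k : ℕ, Multiset.filterMap id (Multiset.replicate k (none : Option T)) = 0 := by
        intro k
        induction k with
        | zero => simp
        | succ k ih => rw [Multiset.replicate_succ, Multiset.filterMap_cons_none _ _ rfl, ih]
      rw [this, hmapg, filterMap_add', Multiset.filterMap_map, hrep, add_zero]
      simp [Multiset.filterMap_eq_map, Function.comp]
end
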